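/- Let (p_{i,j}) be a model with small steps whose kernel K(x,y) = Σ_{(i,j)} p_{i,j} x^{1−i} y^{1−j} − xy satisfies K(0,0) = 0 (equivalently p_{1,1} = 0) and (∂K/∂x)(0,0) ≠ 0 (equivalently p_{0,1} ≠ 0), and let X ∈ ℂ[[y]] with X(0) = 0 and K(X(y), y) = 0. Then for every bivariate formal power series G ∈ ℂ[[x,y]], the kernel K divides X(y)·y·G(X(y), y) − x·y·G(x,y) in ℂ[[x,y]]; moreover the quotient H ∈ ℂ[[x,y]], defined by K·H = X(y)·y·G(X(y),y) − x·y·G(x,y), satisfies H(x,0) = 0. -/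

import Mathlib

open Finset

/-- The set of possible small steps `{-1,0,1} × {-1,0,1}` (the step `(0,0)` is excluded
via the support condition of the model). -/
def SmallStepGrid : Finset (ℤ × ℤ) := ({-1, 0, 1} : Finset ℤ) ×ˢ ({-1, 0, 1} : Finset ℤ)

/-- A model with small steps: nonnegative weights `p i j` supported on
`{-1,0,1}² \ {(0,0)}` summing to `1`. -/
structure SmallStepModel where
  p : ℤ → ℤ → ℝ
  nonneg : ∀ u v, 0 ≤ p u v
  supp : ∀ u v, p u v ≠ 0 → ((u, v) ∈ SmallStepGrid ∧ (u, v) ≠ (0, 0))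
  sum_one : ∑ uv ∈ SmallStepGrid, p uv.1 uv.2 = 1

/-- Zero drift: both coordinates of the mean step vanish. -/
def SmallStepModel.ZeroDrift (M : SmallStepModel) : Prop :=
  (∑ uv ∈ SmallStepGrid, (uv.1 : ℝ) * M.p uv.1 uv.2 = 0) ∧
  (∑ uv ∈ SmallStepGrid, (uv.2 : ℝ) * M.p uv.1 uv.2 = 0)

/-- The cyclic list of the eight boundary weights. -/
def SmallStepModel.cyc (M : SmallStepModel) : Fin 8 → ℝ :=
  ![M.p 1 1, M.p 1 0, M.p 1 (-1), M.p 0 (-1), M.p (-1) (-1), M.p (-1) 0, M.p (-1) 1,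
    M.p 0 1]

/-- Non-degeneracy: the cyclic list of the eight weights contains no
three consecutive zeros. -/
def SmallStepModel.NonDegenerate (M : SmallStepModel) : Prop :=
  ∀ k : Fin 8, ¬(M.cyc k = 0 ∧ M.cyc (k + 1) = 0 ∧ M.cyc (k + 2) = 0)


/-- The kernel `K(x,y) = Σ_{(i,j)} p_{i,j} x^{1−i} y^{1−j} − xy` of the model, viewed as an
element of `ℂ[[x,y]]`. -/
noncomputable def kernelPS (M : SmallStepModel) : MvPowerSeries (Fin 2) ℂ :=
  (∑ uv ∈ SmallStepGrid, MvPowerSeries.C (σ := Fin 2) (R := ℂ) ((M.p uv.1 uv.2 : ℝ) : ℂ) *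
      MvPowerSeries.X 0 ^ (1 - uv.1).toNat * MvPowerSeries.X 1 ^ (1 - uv.2).toNat)
    - MvPowerSeries.X 0 * MvPowerSeries.X 1

/-- Formal substitution `F(X(y), y)` of a pair `(X(y), y)` into a bivariate power series
`F ∈ ℂ[[x,y]]`; this is the correct substitution whenever `X` has zero constant term,
since then the coefficient of `yⁿ` only receives contributions from monomials `x^a y^b`
with `a, b ≤ n`. -/
noncomputable def substXY (Xs : PowerSeries ℂ) (F : MvPowerSeries (Fin 2) ℂ) :
    PowerSeries ℂ :=
  PowerSeries.mk fun n => ∑ a ∈ Finset.range (n + 1), ∑ b ∈ Finset.range (n + 1),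
    MvPowerSeries.coeff (R := ℂ) (Finsupp.single 0 a + Finsupp.single 1 b) F *
      PowerSeries.coeff (R := ℂ) (n - b) (Xs ^ a)

/-- The embedding `ℂ[[y]] → ℂ[[x,y]]` sending a univariate series in `y` to the
corresponding bivariate series. -/
noncomputable def embedY (u : PowerSeries ℂ) : MvPowerSeries (Fin 2) ℂ :=
  fun e => if e 0 = 0 then PowerSeries.coeff (R := ℂ) (e 1) u else 0

/-!
Both `K` and `F = X(y)·y·G(X(y),y) − x·y·G` vanish under `x ↦ X(y)`. After the translation
`x ↦ x + X(y)` a series vanishing at `x = 0` is divisible by `x`, so `K = (x − X(y))·Q` and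
`F = (x − X(y))·R`. Comparing coefficients of `x` gives `Q(0,0) = p_{0,1} ≠ 0`, so `Q` is a unit
and `H = Q⁻¹·R`. Setting `y = 0` in `K·H = F` gives `K(x,0)·H(x,0) = 0` in the domain `ℂ[[x]]`,
where `K(x,0) ≠ 0` since its coefficient of `x` is `p_{0,1}`.
-/

namespace PowerSeries

variable {R : Type*} [CommRing R]

theorem coeff_pow_eq_zero_of_lt {g : PowerSeries R} (hg : constantCoeff g = 0) {n k : ℕ}
    (h : n < k) : coeff n (g ^ k) = 0 := by
  obtain ⟨h', rfl⟩ := X_dvd_iff.mpr hg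
  rw [mul_pow, coeff_X_pow_mul', if_neg (by omega)]

theorem coeff_toMvPowerSeries_one (u : PowerSeries R) (m : Fin 2 →₀ ℕ) :
    MvPowerSeries.coeff m (u.toMvPowerSeries 1) = if m 0 = 0 then coeff (m 1) u else 0 := by
  split_ifs with hm
  · have hm' : m = Finsupp.embDomain (Function.Embedding.punit 1) (Finsupp.single () (m 1)) := by
      rw [Finsupp.embDomain_single]
      change m = Finsupp.single 1 (m 1)
      ext i; fin_cases i <;> simp [hm]
    conv_lhs => rw [hm']
    exact MvPowerSeries.coeff_embDomain_rename _ _ _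
  · apply MvPowerSeries.coeff_rename_eq_zero
    rintro ⟨d, rfl⟩
    exact hm (Finsupp.mapDomain_of_notMem_range _ _ (by simp))

theorem constantCoeff_toMvPowerSeries_one (u : PowerSeries R) :
    MvPowerSeries.constantCoeff (u.toMvPowerSeries (1 : Fin 2)) = constantCoeff u := by
  rw [← MvPowerSeries.coeff_zero_eq_constantCoeff_apply, coeff_toMvPowerSeries_one]
  simp

end PowerSeries

namespace MvPowerSeries

variable {R : Type*} [CommRing R]

theorem hasSubst_pair_X {g : PowerSeries R} (hg : PowerSeries.constantCoeff g = 0) :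
    HasSubst ![g, PowerSeries.X] :=
  hasSubst_of_constantCoeff_zero fun s => by
    fin_cases s
    exacts [hg, PowerSeries.constantCoeff_X]

theorem hasSubst_X_zero : HasSubst ![PowerSeries.X, (0 : PowerSeries R)] :=
  hasSubst_of_constantCoeff_zero fun s => by
    fin_cases s
    exacts [PowerSeries.constantCoeff_X, map_zero _]

theorem coeff_subst_X_zero (F : MvPowerSeries (Fin 2) R) (n : ℕ) :
    PowerSeries.coeff n (subst ![PowerSeries.X, (0 : PowerSeries R)] F) =
      coeff (Finsupp.single 0 n) F := by
  rw [PowerSeries.coeff, coeff_subst hasSubst_X_zero, finsum_eq_single _ (Finsupp.single 0 n)]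
  · simp [Finsupp.prod_fintype, Fin.prod_univ_two]
  · intro d hd
    rw [Finsupp.prod_fintype _ _ (by simp), Fin.prod_univ_two]
    rcases Nat.eq_zero_or_pos (d 1) with h1 | h1
    · have h0 : n ≠ d 0 := fun h => hd (by ext i; fin_cases i <;> simp [h, h1])
      simp [h1, PowerSeries.coeff_X_pow, h0]
    · simp [zero_pow h1.ne']

theorem subst_X_zero_toMvPowerSeries_one {u : PowerSeries R}
    (hu : PowerSeries.constantCoeff u = 0) :
    subst ![PowerSeries.X, (0 : PowerSeries R)] (u.toMvPowerSeries 1) = 0 := by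
  ext n
  rw [coeff_subst_X_zero, PowerSeries.coeff_toMvPowerSeries_one]
  split_ifs with hn <;> simp_all

noncomputable def translateX (c : MvPowerSeries (Fin 2) R) : Fin 2 → MvPowerSeries (Fin 2) R :=
  ![X 0 + c, X 1]

theorem hasSubst_translateX {c : MvPowerSeries (Fin 2) R} (hc : constantCoeff c = 0) :
    HasSubst (translateX c) :=
  hasSubst_of_constantCoeff_zero fun s => by fin_cases s <;> simp [translateX, hc]

variable {g : PowerSeries R}

theorem subst_translateX_toMvPowerSeries_one {c : MvPowerSeries (Fin 2) R}
    (hc : constantCoeff c = 0) :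
    subst (translateX c) (g.toMvPowerSeries 1) = g.toMvPowerSeries 1 := by
  rw [PowerSeries.subst_toMvPowerSeries (hasSubst_translateX hc), translateX]
  exact PowerSeries.toMvPowerSeries_eq_subst.symm

theorem subst_translateX_neg_subst_translateX (hg : PowerSeries.constantCoeff g = 0)
    (F : MvPowerSeries (Fin 2) R) :
    subst (translateX (-g.toMvPowerSeries 1)) (subst (translateX (g.toMvPowerSeries 1)) F) =
      F := by
  have hξ := (PowerSeries.constantCoeff_toMvPowerSeries_one g).trans hg
  have hb := hasSubst_translateX (c := -g.toMvPowerSeries 1) (by simp [hξ])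
  rw [subst_comp_subst_apply (hasSubst_translateX hξ) hb]
  convert congr_fun (subst_self (R := R)) F using 2
  · funext s
    fin_cases s
    · change subst _ (X 0 + _) = X 0
      rw [← coe_substAlgHom hb, map_add, coe_substAlgHom, subst_X hb,
        subst_translateX_toMvPowerSeries_one (by simp [hξ])]
      simp [translateX]
    · exact subst_X hb 1
  · rfl

theorem X_zero_dvd_sub_toMvPowerSeries_one (T : MvPowerSeries (Fin 2) R) :
    X 0 ∣ T - (PowerSeries.mk fun n => coeff (Finsupp.single 1 n) T).toMvPowerSeries 1 := by
  refine X_dvd_iff.mpr fun m hm => ?_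
  rw [map_sub, PowerSeries.coeff_toMvPowerSeries_one, if_pos hm, PowerSeries.coeff_mk,
    sub_eq_zero]
  congr
  ext i; fin_cases i <;> simp [hm]

theorem exists_eq_X_zero_sub_mul_add (hg : PowerSeries.constantCoeff g = 0)
    (F : MvPowerSeries (Fin 2) R) :
    ∃ Q, F = (X 0 - g.toMvPowerSeries 1) * Q +
      PowerSeries.toMvPowerSeries 1 (subst ![g, PowerSeries.X] F) := by
  have hξ := (PowerSeries.constantCoeff_toMvPowerSeries_one g).trans hg
  have hb := hasSubst_translateX (c := -g.toMvPowerSeries 1) (by simp [hξ])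
  obtain ⟨Q, hQ⟩ :=
    X_zero_dvd_sub_toMvPowerSeries_one (subst (translateX (g.toMvPowerSeries 1)) F)
  -- `r` is the `x`-free part of `F(x + g(y), y)`; evaluating at `x = g(y)` identifies it.
  set r : PowerSeries R := PowerSeries.mk fun n =>
    coeff (Finsupp.single 1 n) (subst (translateX (g.toMvPowerSeries 1)) F)
  have hdiv : F = (X 0 - g.toMvPowerSeries 1) * subst (translateX (-g.toMvPowerSeries 1)) Q +
      r.toMvPowerSeries 1 := by
    rw [← subst_translateX_neg_subst_translateX hg F, sub_eq_iff_eq_add.mp hQ,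
      ← coe_substAlgHom hb, map_add, map_mul, coe_substAlgHom, subst_X hb,
      subst_translateX_toMvPowerSeries_one (by simp [hξ])]
    simp [translateX, sub_eq_add_neg]
  have hev := hasSubst_pair_X hg
  have hr : subst ![g, PowerSeries.X] F = r := by
    rw [hdiv, ← coe_substAlgHom hev, map_add, map_mul, map_sub, coe_substAlgHom, subst_X hev,
      PowerSeries.subst_toMvPowerSeries hev, PowerSeries.subst_toMvPowerSeries hev]
    simp [PowerSeries.X_subst]
  exact hr ▸ ⟨_, hdiv⟩

theorem constantCoeff_eq_coeff_of_eq_X_zero_sub_mul (hg : PowerSeries.constantCoeff g = 0)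
    {F Q : MvPowerSeries (Fin 2) R} (h : F = (X 0 - g.toMvPowerSeries 1) * Q) :
    constantCoeff Q = coeff (Finsupp.single 0 1) F := by
  rw [← coeff_subst_X_zero, h, ← coe_substAlgHom hasSubst_X_zero, map_mul, map_sub,
    coe_substAlgHom, subst_X hasSubst_X_zero, subst_X_zero_toMvPowerSeries_one hg]
  simp [coeff_subst_X_zero]

end MvPowerSeries

open MvPowerSeries in
theorem substXY_eq_subst {Xs : PowerSeries ℂ} (hX0 : PowerSeries.constantCoeff Xs = 0)
    (F : MvPowerSeries (Fin 2) ℂ) :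
    substXY Xs F = subst ![Xs, PowerSeries.X] F := by
  ext n
  set φ : (Fin 2 →₀ ℕ) → ℂ := fun d =>
    coeff d F * PowerSeries.coeff n (Xs ^ d 0 * PowerSeries.X ^ d 1)
  have hsubst : PowerSeries.coeff n (subst ![Xs, PowerSeries.X] F) = ∑ᶠ d, φ d := by
    rw [PowerSeries.coeff, coeff_subst (hasSubst_pair_X hX0)]
    congr 1
    funext d
    rw [smul_eq_mul, Finsupp.prod_fintype _ _ (by simp), Fin.prod_univ_two]
    rfl
  have hsupp : Function.support φ ⊆ ↑((Finset.range (n + 1) ×ˢ Finset.range (n + 1)).image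
      fun p => Finsupp.single (0 : Fin 2) p.1 + Finsupp.single 1 p.2) := by
    intro d hd
    simp only [Function.mem_support, φ, PowerSeries.coeff_mul_X_pow'] at hd
    split_ifs at hd with h1
    · have h0 : d 0 ≤ n := by
        by_contra h
        exact hd (by rw [PowerSeries.coeff_pow_eq_zero_of_lt hX0 (by omega), mul_zero])
      refine Finset.mem_image.mpr ⟨(d 0, d 1), by simp [h0, h1], ?_⟩
      ext i; fin_cases i <;> simp
    · simp at hd
  rw [hsubst, finsum_eq_sum_of_support_subset φ hsupp, Finset.sum_image, Finset.sum_product,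
    substXY, PowerSeries.coeff_mk]
  · refine Finset.sum_congr rfl fun a _ => Finset.sum_congr rfl fun b hb => ?_
    simp [φ, PowerSeries.coeff_mul_X_pow', Nat.lt_succ_iff.mp (Finset.mem_range.mp hb)]
  · intro p _ q _ hpq
    have h0 := congrArg (· 0) hpq
    have h1 := congrArg (· 1) hpq
    exact Prod.ext (by simpa using h0) (by simpa using h1)

theorem embedY_eq_toMvPowerSeries (u : PowerSeries ℂ) : embedY u = u.toMvPowerSeries 1 := by
  ext m
  rw [PowerSeries.coeff_toMvPowerSeries_one]
  rfl

open MvPowerSeries in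
theorem substXY_embedY_sub_eq_zero {Xs : PowerSeries ℂ}
    (hX0 : PowerSeries.constantCoeff Xs = 0) (G : MvPowerSeries (Fin 2) ℂ) :
    substXY Xs (embedY (Xs * PowerSeries.X * substXY Xs G) - X 0 * X 1 * G) = 0 := by
  have hev := hasSubst_pair_X hX0
  have hevX (s : Fin 2) : substAlgHom (R := ℂ) hev (X s) = ![Xs, PowerSeries.X] s := by
    rw [coe_substAlgHom, subst_X hev]
  have hevT (u : PowerSeries ℂ) : substAlgHom (R := ℂ) hev (u.toMvPowerSeries 1) = u := by
    rw [coe_substAlgHom, PowerSeries.subst_toMvPowerSeries hev]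
    exact PowerSeries.X_subst u
  rw [substXY_eq_subst hX0, substXY_eq_subst hX0, embedY_eq_toMvPowerSeries,
    ← coe_substAlgHom hev]
  simp only [map_sub, map_mul, hevX, hevT]
  simp

theorem coeff_kernelPS_single_zero_one (M : SmallStepModel) :
    MvPowerSeries.coeff (Finsupp.single 0 1) (kernelPS M) = (M.p 0 1 : ℂ) := by
  have hρ := MvPowerSeries.hasSubst_X_zero (R := ℂ)
  rw [← MvPowerSeries.coeff_subst_X_zero, ← MvPowerSeries.coe_substAlgHom hρ]
  simp only [kernelPS, SmallStepGrid, Finset.sum_product, map_sub, map_sum, map_mul, map_pow,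
    MvPowerSeries.coe_substAlgHom, MvPowerSeries.subst_X hρ, MvPowerSeries.subst_C]
  simp [← PowerSeries.C_apply, PowerSeries.coeff_X_pow]

open MvPowerSeries in
theorem subst_X_zero_embedY_sub_eq_zero (Xs : PowerSeries ℂ) (G : MvPowerSeries (Fin 2) ℂ) :
    subst ![PowerSeries.X, (0 : PowerSeries ℂ)]
      (embedY (Xs * PowerSeries.X * substXY Xs G) - X 0 * X 1 * G) = 0 := by
  have hρX1 : substAlgHom (R := ℂ) (hasSubst_X_zero (R := ℂ)) (X 1) = 0 := by
    rw [coe_substAlgHom, subst_X hasSubst_X_zero]; rfl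
  rw [← coe_substAlgHom hasSubst_X_zero, map_sub, map_mul, map_mul, hρX1, mul_zero, zero_mul,
    sub_zero, coe_substAlgHom, embedY_eq_toMvPowerSeries,
    subst_X_zero_toMvPowerSeries_one (by simp)]

open MvPowerSeries in
theorem kernel_divides_substituted_series_general (M : SmallStepModel)
    (hKdx : M.p 0 1 ≠ 0)
    (Xs : PowerSeries ℂ) (hX0 : PowerSeries.constantCoeff (R := ℂ) Xs = 0)
    (hKX : substXY Xs (kernelPS M) = 0)
    (G : MvPowerSeries (Fin 2) ℂ) :
    ∃ H : MvPowerSeries (Fin 2) ℂ,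
      embedY (Xs * PowerSeries.X * substXY Xs G) - MvPowerSeries.X 0 * MvPowerSeries.X 1 * G
        = kernelPS M * H ∧
      ∀ n : ℕ, MvPowerSeries.coeff (R := ℂ) (Finsupp.single 0 n) H = 0 := by
  set F := embedY (Xs * PowerSeries.X * substXY Xs G) - X 0 * X 1 * G
  obtain ⟨Q, hQ⟩ := exists_eq_X_zero_sub_mul_add hX0 (kernelPS M)
  obtain ⟨R, hR⟩ := exists_eq_X_zero_sub_mul_add hX0 F
  rw [← substXY_eq_subst hX0, hKX, map_zero, add_zero] at hQ
  rw [← substXY_eq_subst hX0, substXY_embedY_sub_eq_zero hX0, map_zero, add_zero] at hR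
  have hQu : IsUnit Q := by
    rw [isUnit_iff_constantCoeff, constantCoeff_eq_coeff_of_eq_X_zero_sub_mul hX0 hQ,
      coeff_kernelPS_single_zero_one]
    exact isUnit_iff_ne_zero.mpr (by exact_mod_cast hKdx)
  set H := ↑hQu.unit⁻¹ * R
  have hKH : F = kernelPS M * H := by
    rw [hR, hQ, mul_assoc, ← mul_assoc Q, hQu.mul_val_inv, one_mul]
  refine ⟨H, hKH, fun n => ?_⟩
  have hρ := congrArg (substAlgHom (R := ℂ) (hasSubst_X_zero (R := ℂ))) hKH
  rw [map_mul, coe_substAlgHom, subst_X_zero_embedY_sub_eq_zero, eq_comm, mul_eq_zero] at hρ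
  have hρK : subst ![PowerSeries.X, (0 : PowerSeries ℂ)] (kernelPS M) ≠ 0 := fun h => hKdx <| by
    have := congrArg (PowerSeries.coeff 1) h
    rwa [coeff_subst_X_zero, coeff_kernelPS_single_zero_one, map_zero,
      Complex.ofReal_eq_zero] at this
  rw [← coeff_subst_X_zero, hρ.resolve_left hρK, map_zero]

/-- If `K(0,0) = 0` (i.e. `p_{1,1} = 0`), `(∂K/∂x)(0,0) ≠ 0` (i.e. `p_{0,1} ≠ 0`) and
`X ∈ ℂ[[y]]` satisfies `X(0) = 0` and `K(X(y), y) = 0`, then for every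
`G ∈ ℂ[[x,y]]` the kernel `K` divides `X(y)·y·G(X(y), y) − x·y·G(x,y)` in `ℂ[[x,y]]`,
and the quotient `H` (defined by `K·H` being equal to this series) satisfies
`H(x,0) = 0`. -/
theorem kernel_divides_substituted_series (M : SmallStepModel)
    (hK00 : M.p 1 1 = 0) (hKdx : M.p 0 1 ≠ 0)
    (Xs : PowerSeries ℂ) (hX0 : PowerSeries.constantCoeff (R := ℂ) Xs = 0)
    (hKX : substXY Xs (kernelPS M) = 0)
    (G : MvPowerSeries (Fin 2) ℂ) :
    ∃ H : MvPowerSeries (Fin 2) ℂ,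
      embedY (Xs * PowerSeries.X * substXY Xs G) - MvPowerSeries.X 0 * MvPowerSeries.X 1 * G
        = kernelPS M * H ∧
      ∀ n : ℕ, MvPowerSeries.coeff (R := ℂ) (Finsupp.single 0 n) H = 0 :=
  kernel_divides_substituted_series_general M hKdx Xs hX0 hKX G
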